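/- Assume μ_n < 0 (the defocusing case). Then g(β) < 0 for all β < μ_1, f is strictly decreasing on (−∞, μ_1), and f maps (−∞, μ_1) bijectively onto the interval (−1, −1 + 2/(n−1)). In particular, for every real λ the equation f(β) = λ has a solution β ∈ (−∞, μ_1) if and only if −1 < λ < −1 + 2/(n−1), and in that case the solution is unique. -/

import Mathlib

/-!
For `β < μ₁ ≤ μⱼ < 0` write `β / (μⱼ - β) = μⱼ / (μⱼ - β) - 1`, so that
`g β = 1 - n + ∑ⱼ μⱼ / (μⱼ - β)`. Every summand is negative and strictly decreasing on
`(-∞, μ₁)` and tends to `0` at `-∞`, while the first one tends to `-∞` at `μ₁⁻`. By the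
intermediate value theorem `g` is therefore a decreasing bijection of `(-∞, μ₁)` onto
`(-∞, 1 - n)`, and `t ↦ -1 - 2 / t` is an increasing bijection of `(-∞, 1 - n)` onto
`(-1, -1 + 2 / (n - 1))`.
-/

open Set Finset Filter Topology

section Pole

variable {c : ℝ}

lemma strictAntiOn_div_sub_self (hc : c < 0) : StrictAntiOn (fun β => c / (c - β)) (Iio c) := by
  intro a _ b hb hab
  have h := div_lt_div_of_pos_left (neg_pos.2 hc) (sub_pos.2 hb) (by linarith : c - b < c - a)
  rw [neg_div, neg_div] at h
  exact neg_lt_neg_iff.1 h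

lemma tendsto_div_sub_self_atBot (c : ℝ) : Tendsto (fun β => c / (c - β)) atBot (𝓝 0) :=
  tendsto_const_nhds.div_atTop (tendsto_atTop_add_const_left _ c tendsto_neg_atBot_atTop)

lemma tendsto_div_sub_self_nhdsLT (hc : c < 0) :
    Tendsto (fun β => c / (c - β)) (𝓝[<] c) atBot := by
  have h : Tendsto (fun β => c - β) (𝓝[<] c) (𝓝[>] 0) := by
    refine tendsto_nhdsWithin_of_tendsto_nhds_of_eventually_within _ ?_ ?_
    · exact ((continuous_sub_left c).tendsto' c 0 (sub_self c)).mono_left nhdsWithin_le_nhds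
    · exact eventually_nhdsWithin_of_forall fun β hβ => mem_Ioi.2 (sub_pos.2 hβ)
  exact (tendsto_inv_nhdsGT_zero.comp h).const_mul_atTop_of_neg hc

end Pole

lemma surjOn_Iio_of_tendsto {α δ : Type*} [ConditionallyCompleteLinearOrder α]
    [TopologicalSpace α] [OrderTopology α] [DenselyOrdered α] [NoMinOrder α]
    [LinearOrder δ] [TopologicalSpace δ] [OrderTopology δ] {G : α → δ} {m : α} {L : δ} (hG : ContinuousOn G (Iio m))
    (hbot : Tendsto G atBot (𝓝 L)) (hm : Tendsto G (𝓝[<] m) atBot) :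
    SurjOn G (Iio m) (Iio L) := by
  intro t ht
  obtain ⟨a, ha, hta⟩ :=
    ((eventually_lt_atBot m).and (hbot.eventually (lt_mem_nhds ht))).exists
  obtain ⟨b, hbt, hb⟩ :=
    ((hm.eventually (eventually_le_atBot t)).and self_mem_nhdsWithin).exists
  exact isPreconnected_Iio.intermediate_value hb (mem_Iio.2 ha) hG ⟨hbt, hta.le⟩

noncomputable def secularFun {ι : Type*} [Fintype ι] (μ : ι → ℝ) (β : ℝ) : ℝ :=
  1 - Fintype.card ι + ∑ j, μ j / (μ j - β)

section Secular

variable {ι : Type*} [Fintype ι] {μ : ι → ℝ} {β m : ℝ}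

lemma one_add_mul_sum_eq_secularFun (hβ : ∀ j, β ≠ μ j) :
    1 + β * ∑ j, 1 / (μ j - β) = secularFun μ β := by
  have h : ∀ j, β * (1 / (μ j - β)) = μ j / (μ j - β) - 1 := fun j => by
    field_simp [sub_ne_zero.2 (hβ j).symm]
    ring
  simp only [secularFun, mul_sum, h, sum_sub_distrib, sum_const, card_univ, nsmul_eq_mul, mul_one]
  ring

lemma secularFun_lt [Nonempty ι] (hμ : ∀ j, μ j < 0) (hβ : ∀ j, β < μ j) :
    secularFun μ β < 1 - Fintype.card ι :=
  add_lt_of_neg_right _ <| sum_neg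
    (fun j _ => div_neg_of_neg_of_pos (hμ j) (sub_pos.2 (hβ j))) (univ_nonempty (α := ι))

lemma strictAntiOn_secularFun [Nonempty ι] (hμ : ∀ j, μ j < 0) (hm : ∀ j, m ≤ μ j) :
    StrictAntiOn (secularFun μ) (Iio m) := by
  intro a ha b hb hab
  exact add_lt_add_right (sum_lt_sum_of_nonempty (univ_nonempty (α := ι)) fun j _ =>
    strictAntiOn_div_sub_self (hμ j) (ha.trans_le (hm j)) (hb.trans_le (hm j)) hab) _

lemma continuousOn_secularFun (hm : ∀ j, m ≤ μ j) : ContinuousOn (secularFun μ) (Iio m) :=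
  continuousOn_const.add <| continuousOn_finsetSum _ fun j _ =>
    continuousOn_const.div (continuousOn_const.sub continuousOn_id)
      fun _ hβ => (sub_pos.2 (lt_of_lt_of_le hβ (hm j))).ne'

lemma tendsto_secularFun_atBot :
    Tendsto (secularFun μ) atBot (𝓝 (1 - Fintype.card ι)) := by
  have h := (tendsto_const_nhds (x := 1 - (Fintype.card ι : ℝ))).add
    (tendsto_finsetSum univ fun j _ => tendsto_div_sub_self_atBot (μ j))
  rwa [sum_const_zero, add_zero] at h

lemma tendsto_secularFun_nhdsLT (hμ : ∀ j, μ j < 0) {i : ι} (hi : ∀ j, μ i ≤ μ j) :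
    Tendsto (secularFun μ) (𝓝[<] μ i) atBot := by
  classical
  have hle : ∀ β ∈ Iio (μ i), secularFun μ β ≤ 1 - Fintype.card ι + μ i / (μ i - β) := by
    intro β hβ
    have hrest : ∑ j ∈ univ.erase i, μ j / (μ j - β) ≤ 0 := sum_nonpos fun j _ =>
      (div_neg_of_neg_of_pos (hμ j) (sub_pos.2 (lt_of_lt_of_le hβ (hi j)))).le
    rw [secularFun, ← add_sum_erase _ _ (mem_univ i)]
    linarith
  exact tendsto_atBot_mono' _ (eventually_nhdsWithin_of_forall hle)
    (tendsto_atBot_add_const_left _ _ (tendsto_div_sub_self_nhdsLT (hμ i)))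

lemma bijOn_secularFun [Nonempty ι] (hμ : ∀ j, μ j < 0) {i : ι} (hi : ∀ j, μ i ≤ μ j) :
    BijOn (secularFun μ) (Iio (μ i)) (Iio (1 - Fintype.card ι)) :=
  ⟨fun _ hβ => secularFun_lt hμ fun j => lt_of_lt_of_le hβ (hi j),
    (strictAntiOn_secularFun hμ hi).injOn,
    surjOn_Iio_of_tendsto (continuousOn_secularFun hi) tendsto_secularFun_atBot
      (tendsto_secularFun_nhdsLT hμ hi)⟩

end Secular

section Reciprocal

variable {a b L : ℝ}

lemma strictMonoOn_sub_div (hb : 0 < b) : StrictMonoOn (fun t => a - b / t) (Iio 0) := by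
  intro s _ t ht hst
  have h := mul_lt_mul_of_pos_left (one_div_lt_one_div_of_neg_of_lt ht hst) hb
  simp only [mul_one_div] at h
  exact sub_lt_sub_left h a

lemma bijOn_sub_div (hb : 0 < b) (hL : L < 0) :
    BijOn (fun t => a - b / t) (Iio L) (Ioo a (a - b / L)) := by
  have hmono := strictMonoOn_sub_div (a := a) hb
  have hsub : Iio L ⊆ Iio 0 := Iio_subset_Iio hL.le
  refine ⟨fun t ht => ⟨?_, hmono (hsub ht) hL ht⟩, hmono.injOn.mono hsub, fun y hy => ?_⟩
  · have : b / t < 0 := div_neg_of_pos_of_neg hb (ht.trans hL)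
    simp only
    linarith
  · have hy0 : a - y < 0 := sub_neg.2 hy.1
    have ht : b / (a - y) < 0 := div_neg_of_pos_of_neg hb hy0
    have hval : a - b / (b / (a - y)) = y := by
      rw [div_div_cancel₀ hb.ne', sub_sub_cancel]
    refine ⟨b / (a - y), (hmono.lt_iff_lt ht hL).1 ?_, hval⟩
    simpa only [hval] using hy.2

end Reciprocal

/-- Defocusing case: `g < 0` on `(-∞, μ₁)`, `f` is strictly decreasing there and maps
`(-∞, μ₁)` bijectively onto `(-1, -1 + 2/(n-1))`; hence `f(β) = λ` is solvable in
`(-∞, μ₁)` iff `-1 < λ < -1 + 2/(n-1)`, and then the solution is unique. -/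
theorem defocusing_f_bijective (n : ℕ) (hn : 2 ≤ n) (μ : Fin n → ℝ) (hμ : Monotone μ)
    (g : ℝ → ℝ)
    (hg : ∀ β : ℝ, (∀ j, β ≠ μ j) → g β = 1 + β * ∑ j, 1 / (μ j - β))
    (f : ℝ → ℝ)
    (hf : ∀ β : ℝ, g β ≠ 0 → f β = -1 - 2 / g β)
    (hdef : μ ⟨n - 1, by omega⟩ < 0) :
    (∀ β : ℝ, β < μ ⟨0, by omega⟩ → g β < 0) ∧
    StrictAntiOn f (Iio (μ ⟨0, by omega⟩)) ∧
    Set.BijOn f (Iio (μ ⟨0, by omega⟩)) (Ioo (-1 : ℝ) (-1 + 2 / ((n : ℝ) - 1))) ∧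
    (∀ lam : ℝ, (∃ β : ℝ, β < μ ⟨0, by omega⟩ ∧ f β = lam) ↔
      (-1 < lam ∧ lam < -1 + 2 / ((n : ℝ) - 1))) ∧
    (∀ lam : ℝ, -1 < lam → lam < -1 + 2 / ((n : ℝ) - 1) →
      ∃! β : ℝ, β < μ ⟨0, by omega⟩ ∧ f β = lam) := by
  have : Nonempty (Fin n) := ⟨⟨0, by omega⟩⟩
  have hmin : ∀ j, μ ⟨0, by omega⟩ ≤ μ j := fun j => hμ (Nat.zero_le j.val)
  have hneg : ∀ j, μ j < 0 := fun j => (hμ (Nat.le_sub_one_of_lt j.isLt)).trans_lt hdef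
  have hgs : EqOn (secularFun μ) g (Iio (μ ⟨0, by omega⟩)) := fun β hβ =>
    have hβμ : ∀ j, β ≠ μ j := fun j => (hβ.trans_le (hmin j)).ne
    ((hg β hβμ).trans (one_add_mul_sum_eq_secularFun hβμ)).symm
  have hn1 : 1 - (n : ℝ) < 0 := by
    have : (2 : ℝ) ≤ n := by exact_mod_cast hn
    linarith
  have hgbij : BijOn g (Iio (μ ⟨0, by omega⟩)) (Iio (1 - n)) := by
    simpa only [Fintype.card_fin] using (bijOn_secularFun hneg hmin).congr hgs
  have hgneg : ∀ β, β < μ ⟨0, by omega⟩ → g β < 0 := fun β hβ => (hgbij.mapsTo hβ).trans hn1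
  have hfg : EqOn ((fun t => -1 - 2 / t) ∘ g) f (Iio (μ ⟨0, by omega⟩)) := fun β hβ =>
    (hf β (hgneg β hβ).ne).symm
  have hfanti : StrictAntiOn f (Iio (μ ⟨0, by omega⟩)) :=
    ((strictMonoOn_sub_div two_pos).comp_strictAntiOn
      ((strictAntiOn_secularFun hneg hmin).congr hgs) hgneg).congr hfg
  have hfbij : BijOn f (Iio (μ ⟨0, by omega⟩)) (Ioo (-1) (-1 + 2 / ((n : ℝ) - 1))) := by
    rw [← neg_sub, div_neg, ← sub_eq_add_neg]
    exact ((bijOn_sub_div two_pos hn1).comp hgbij).congr hfg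
  refine ⟨hgneg, hfanti, hfbij, fun lam => Set.ext_iff.1 hfbij.image_eq lam, fun lam h1 h2 => ?_⟩
  obtain ⟨β, hβ, rfl⟩ := hfbij.surjOn ⟨h1, h2⟩
  exact ⟨β, ⟨hβ, rfl⟩, fun γ hγ => hfbij.injOn hγ.1 hβ hγ.2⟩
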